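/- Consider the discrete-time system x⁺ = F(d,x) on a closed set S ⊆ ℝⁿ with equilibrium x*. Suppose A ⊆ S is a trapping region with transient bound m, there exist V_i : S → ℝ≥0 (i = 1,…,l), a nonnegative matrix Γ with ρ(Γ) < 1 and functions a₁, a₂ ∈ K_∞ with a₁ ≤ a₂ such that a₁(|x−x*|) ≤ max_i V_i(x) ≤ a₂(|x−x*|) and V_i(F(d,x)) ≤ Σ_j γ_{i,j} V_j(x) for all x ∈ A, d ∈ D. Assume additionally F is locally bounded and continuous on D×{x*}. Then x* is robustly globally asymptotically stable: there exists σ ∈ KL such that every solution satisfies |x(t)−x*| ≤ σ(|x(0)−x*|, t) for all t ∈ ℕ. -/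

import Mathlib

/-!
Let `β s` be the larger of `s` and the supremum of `‖F d x - x*‖` over `d ∈ D`, `x ∈ S`,
`‖x - x*‖ ≤ s`. Local boundedness makes `β` finite and monotone; continuity of `F` on `D × {x*}`
and compactness of `D` make it continuous at `0` with `β 0 = 0`. So during the transient
`t ≤ m` every solution satisfies `‖x t - x*‖ ≤ β^[m] ‖x 0 - x*‖`. From time `m` on the solution
stays in `A`, where the Lyapunov inequalities iterate to `V (x (m + k)) ≤ Γ ^ k V (x m)`
componentwise (as `Γ ≥ 0`), and Gelfand's formula turns `ρ(Γ) < 1` into row sums of `Γ ^ k`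
bounded by `c r ^ k` with `r < 1`. Together, `a₁ ‖x t - x*‖ ≤ g ‖x 0 - x*‖ * r ^ t` for a
monotone `g` vanishing continuously at `0`. Majorising `g` by the continuous strictly increasing
`K s = s + ∫ v in 1..2, g (s v)` and inverting `a₁` gives the `KL` bound `a₁⁻¹ (K s * r ^ t)`.
-/

/-- A class `K_∞` function: continuous, strictly increasing, zero at zero, unbounded. -/
def IsKInfFun (a : ℝ → ℝ) : Prop :=
  ContinuousOn a (Set.Ici 0) ∧ StrictMonoOn a (Set.Ici 0) ∧ a 0 = 0 ∧
    Filter.Tendsto a Filter.atTop Filter.atTop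

/-- A class `KL` function. -/
def IsKLFun (σ : ℝ → ℝ → ℝ) : Prop :=
  (∀ t, 0 ≤ t → ContinuousOn (fun s => σ s t) (Set.Ici 0) ∧
      StrictMonoOn (fun s => σ s t) (Set.Ici 0) ∧ σ 0 t = 0 ∧ ∀ s, 0 ≤ s → 0 ≤ σ s t) ∧
  (∀ s, 0 ≤ s → AntitoneOn (fun t => σ s t) (Set.Ici 0) ∧
      Filter.Tendsto (fun t => σ s t) Filter.atTop (nhds 0))

open Asymptotics Filter Topology Set MeasureTheory Matrix
open scoped NNReal ENNReal

theorem exists_norm_pow_le_mul_pow_of_spectralRadius_lt {A : Type*} [NormedRing A]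
    [NormedAlgebra ℂ A] [CompleteSpace A] {a : A} {r : ℝ≥0} (h : spectralRadius ℂ a < r) :
    ∃ C > 0, ∀ p : ℕ, ‖a ^ p‖ ≤ C * r ^ p := by
  have hr : (0 : ℝ) < r := ENNReal.coe_pos.mp (zero_le.trans_lt h)
  have hO : (fun p => a ^ p) =O[atTop] (fun p => (r : ℝ) ^ p) := by
    refine IsBigO.of_bound 1 ?_
    have hgelfand := spectrum.pow_nnnorm_pow_one_div_tendsto_nhds_spectralRadius a
    filter_upwards [hgelfand.eventually_lt_const h, eventually_ge_atTop 1] with p hp hp1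
    have hp0 : (0 : ℝ) < p := by exact_mod_cast hp1
    rw [one_div, ← ENNReal.coe_rpow_of_nonneg _ (by positivity), ENNReal.coe_lt_coe,
      NNReal.rpow_inv_lt_iff hp0, NNReal.rpow_natCast] at hp
    simpa [abs_of_pos hr] using (show ‖a ^ p‖ ≤ r ^ p from mod_cast hp.le)
  obtain ⟨C, hC, hbound⟩ := bound_of_isBigO_nat_atTop hO
  exact ⟨C, hC, fun p => by simpa [abs_of_pos hr] using hbound (pow_ne_zero p hr.ne')⟩

theorem Matrix.exists_sum_abs_pow_apply_le {ι : Type*} [Fintype ι] [DecidableEq ι]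
    (Γ : Matrix ι ι ℝ) (hρ : ∀ μ : ℂ, (Γ.map Complex.ofReal).charpoly.IsRoot μ → ‖μ‖ < 1) :
    ∃ c r : ℝ, 0 ≤ c ∧ 0 < r ∧ r < 1 ∧ ∀ (k : ℕ) (i : ι), ∑ j, |(Γ ^ k) i j| ≤ c * r ^ k := by
  let : NormedRing (Matrix ι ι ℂ) := Matrix.linftyOpNormedRing
  let : NormedAlgebra ℂ (Matrix ι ι ℂ) := Matrix.linftyOpNormedAlgebra
  have : CompleteSpace (Matrix ι ι ℂ) := FiniteDimensional.complete ℂ _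
  set M := Γ.map Complex.ofReal
  have hM : spectralRadius ℂ M < 1 := by
    rcases (spectrum ℂ M).eq_empty_or_nonempty with h | h
    · simp [spectralRadius, h]
    · exact_mod_cast spectrum.spectralRadius_lt_of_forall_lt_of_nonempty h (r := 1)
        fun z hz => mod_cast hρ z (Matrix.mem_spectrum_iff_isRoot_charpoly.mp hz)
  obtain ⟨r, hMr, hr1⟩ := ENNReal.lt_iff_exists_nnreal_btwn.mp hM
  obtain ⟨C, hC, hpow⟩ := exists_norm_pow_le_mul_pow_of_spectralRadius_lt hMr
  refine ⟨C, r, hC.le, ENNReal.coe_pos.mp (zero_le.trans_lt hMr), mod_cast hr1, fun k i => ?_⟩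
  have hrow : ∑ j, ‖(M ^ k) i j‖ ≤ ‖M ^ k‖ := by
    rw [Matrix.linfty_opNorm_def]
    simpa only [← coe_nnnorm, ← NNReal.coe_sum, NNReal.coe_le_coe] using
      Finset.le_sup (f := fun i => ∑ j, ‖(M ^ k) i j‖₊) (Finset.mem_univ i)
  have hMk : M ^ k = (Γ ^ k).map Complex.ofReal := (Matrix.map_pow Γ Complex.ofRealHom k).symm
  calc ∑ j, |(Γ ^ k) i j| = ∑ j, ‖(M ^ k) i j‖ := by simp [hMk]
    _ ≤ C * r ^ k := hrow.trans (hpow k)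

theorem Matrix.le_pow_mulVec_of_le_mulVec {ι : Type*} [Fintype ι] [DecidableEq ι]
    {Γ : Matrix ι ι ℝ} (hΓ : ∀ i j, 0 ≤ Γ i j) {v : ℕ → ι → ℝ} {w : ι → ℝ}
    (hv : ∀ k, v (k + 1) ≤ Γ *ᵥ v k) (hw : v 0 ≤ w) (k : ℕ) : v k ≤ (Γ ^ k) *ᵥ w := by
  induction k with
  | zero => simpa using hw
  | succ k ih =>
    calc v (k + 1) ≤ Γ *ᵥ v k := hv k
      _ ≤ Γ *ᵥ ((Γ ^ k) *ᵥ w) := fun i =>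
          Finset.sum_le_sum fun j _ => mul_le_mul_of_nonneg_left (ih j) (hΓ i j)
      _ = (Γ ^ (k + 1)) *ᵥ w := by rw [Matrix.mulVec_mulVec, pow_succ']

theorem IsCompact.eventually_forall_mem_of_continuousWithinAt {X Y Z : Type*}
    [TopologicalSpace X] [TopologicalSpace Y] [TopologicalSpace Z] {f : X × Y → Z}
    {D : Set X} {S : Set Y} {y₀ : Y} {z₀ : Z} (hD : IsCompact D)
    (hf : ∀ d ∈ D, ContinuousWithinAt f (D ×ˢ S) (d, y₀)) (hfz : ∀ d ∈ D, f (d, y₀) = z₀)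
    {U : Set Z} (hU : U ∈ 𝓝 z₀) : ∀ᶠ y in 𝓝[S] y₀, ∀ d ∈ D, f (d, y) ∈ U := by
  have hloc : ∀ d ∈ D, ∀ᶠ p : Y × X in 𝓝[S] y₀ ×ˢ 𝓝 d, p.2 ∈ D → f (p.2, p.1) ∈ U := by
    intro d hd
    have h : ∀ᶠ q in 𝓝 d ×ˢ 𝓝 y₀, q ∈ D ×ˢ S → f q ∈ U := by
      rw [← nhds_prod_eq]
      exact mem_nhdsWithin_iff_eventually.mp (hf d hd (by rwa [hfz d hd]))
    filter_upwards [prod_mono nhdsWithin_le_nhds le_rfl (eventually_swap_iff.mp h),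
      prod_mem_prod self_mem_nhdsWithin univ_mem] with p hp hS hD'
    exact hp ⟨hD', hS.1⟩
  have := prod_mono le_rfl principal_le_nhdsSet (hD.mem_prod_nhdsSet_of_forall hloc)
  exact (eventually_prod_principal_iff.mp this).mono fun y hy d hd => hy d hd hd

noncomputable def oneStepBound {L E : Type*} [NormedAddCommGroup E] (D : Set L) (S : Set E)
    (F : L → E → E) (x₀ : E) (s : ℝ) : ℝ :=
  max s (sSup {r | ∃ d ∈ D, ∃ x ∈ S, ‖x - x₀‖ ≤ s ∧ ‖F d x - x₀‖ = r})

section oneStepBound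

variable {L E : Type*} [NormedAddCommGroup E] {D : Set L} {S : Set E} {F : L → E → E} {x₀ : E}

theorem bddAbove_oneStepBound_set
    (hF : ∀ R : ℝ, ∃ C : ℝ, ∀ d ∈ D, ∀ x ∈ S, ‖x‖ ≤ R → ‖F d x‖ ≤ C) (s : ℝ) :
    BddAbove {r | ∃ d ∈ D, ∃ x ∈ S, ‖x - x₀‖ ≤ s ∧ ‖F d x - x₀‖ = r} := by
  obtain ⟨C, hC⟩ := hF (s + ‖x₀‖)
  refine ⟨C + ‖x₀‖, ?_⟩
  rintro _ ⟨d, hd, x, hx, hxs, rfl⟩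
  have hxR : ‖x‖ ≤ s + ‖x₀‖ := by
    simpa using norm_le_norm_add_norm_sub' x x₀ |>.trans (by linarith)
  linarith [norm_sub_le (F d x) x₀, hC d hd x hx hxR]

theorem le_oneStepBound (s : ℝ) : s ≤ oneStepBound D S F x₀ s := le_max_left _ _

theorem oneStepBound_nonneg (s : ℝ) : 0 ≤ oneStepBound D S F x₀ s :=
  le_max_of_le_right <| Real.sSup_nonneg <| by rintro _ ⟨d, -, x, -, -, rfl⟩; positivity

theorem norm_sub_le_oneStepBound
    (hF : ∀ R : ℝ, ∃ C : ℝ, ∀ d ∈ D, ∀ x ∈ S, ‖x‖ ≤ R → ‖F d x‖ ≤ C) {d : L} (hd : d ∈ D)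
    {x : E} (hx : x ∈ S) {s : ℝ} (hxs : ‖x - x₀‖ ≤ s) :
    ‖F d x - x₀‖ ≤ oneStepBound D S F x₀ s :=
  le_max_of_le_right <| le_csSup (bddAbove_oneStepBound_set hF s) ⟨d, hd, x, hx, hxs, rfl⟩

theorem monotone_oneStepBound
    (hF : ∀ R : ℝ, ∃ C : ℝ, ∀ d ∈ D, ∀ x ∈ S, ‖x‖ ≤ R → ‖F d x‖ ≤ C) :
    Monotone (oneStepBound D S F x₀) := fun s t hst =>
  max_le (hst.trans (le_oneStepBound t)) <| Real.sSup_le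
    (by
      rintro _ ⟨d, hd, x, hx, hxs, rfl⟩
      exact norm_sub_le_oneStepBound hF hd hx (hxs.trans hst))
    (oneStepBound_nonneg t)

theorem oneStepBound_zero (hFx₀ : ∀ d ∈ D, F d x₀ = x₀) : oneStepBound D S F x₀ 0 = 0 := by
  refine max_eq_left <| Real.sSup_nonpos ?_
  rintro _ ⟨d, hd, x, -, hx, rfl⟩
  rw [norm_le_zero_iff, sub_eq_zero] at hx
  simp [hx, hFx₀ d hd]

theorem continuousAt_oneStepBound_zero (hFx₀ : ∀ d ∈ D, F d x₀ = x₀)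
    (hFc : ∀ U ∈ 𝓝 x₀, ∀ᶠ x in 𝓝[S] x₀, ∀ d ∈ D, F d x ∈ U) :
    ContinuousAt (oneStepBound D S F x₀) 0 := by
  rw [ContinuousAt, oneStepBound_zero hFx₀, Metric.tendsto_nhds]
  intro ε hε
  obtain ⟨δ, hδ, hball⟩ :=
    Metric.mem_nhdsWithin_iff.mp (hFc _ (Metric.ball_mem_nhds x₀ (half_pos hε)))
  filter_upwards [Iio_mem_nhds hδ, Iio_mem_nhds hε] with s hsδ hsε
  rw [Real.dist_0_eq_abs, abs_of_nonneg (oneStepBound_nonneg s)]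
  refine max_lt hsε <| (Real.sSup_le ?_ (half_pos hε).le).trans_lt (half_lt_self hε)
  rintro _ ⟨d, hd, x, hx, hxs, rfl⟩
  exact (mem_ball_iff_norm.mp (hball ⟨mem_ball_iff_norm.mpr (hxs.trans_lt hsδ), hx⟩ d hd)).le

theorem norm_sub_le_oneStepBound_iterate
    (hF : ∀ R : ℝ, ∃ C : ℝ, ∀ d ∈ D, ∀ x ∈ S, ‖x‖ ≤ R → ‖F d x‖ ≤ C)
    (hFS : ∀ d ∈ D, ∀ x ∈ S, F d x ∈ S) {x : ℕ → E} {d : ℕ → L} (hx0 : x 0 ∈ S)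
    (hd : ∀ t, d t ∈ D) (hx : ∀ t, x (t + 1) = F (d t) (x t)) (t : ℕ) :
    ‖x t - x₀‖ ≤ (oneStepBound D S F x₀)^[t] ‖x 0 - x₀‖ := by
  have hxS : ∀ t, x t ∈ S := fun t => Nat.rec hx0 (fun t ih => hx t ▸ hFS _ (hd t) _ ih) t
  induction t with
  | zero => rfl
  | succ t ih =>
    rw [hx t, Function.iterate_succ_apply']
    exact norm_sub_le_oneStepBound hF (hd t) (hxS t) ih

end oneStepBound

theorem IsKInfFun.nonneg {a : ℝ → ℝ} (ha : IsKInfFun a) {s : ℝ} (hs : 0 ≤ s) : 0 ≤ a s :=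
  ha.2.2.1 ▸ ha.2.1.monotoneOn self_mem_Ici hs hs

theorem IsKInfFun.exists_orderIso {a : ℝ → ℝ} (ha : IsKInfFun a) :
    ∃ e : ℝ ≃o ℝ, ∀ s, 0 ≤ s → e s = a s := by
  obtain ⟨hcont, hmono, h0, htop⟩ := ha
  set a' : ℝ → ℝ := fun s => a (max s 0) + min s 0
  have hneg : ∀ s ≤ 0, a' s = s := fun s hs => by simp [a', hs, h0]
  have hpos : ∀ s, 0 ≤ s → a' s = a s := fun s hs => by simp [a', hs]
  have hstrict : StrictMono a' :=
    StrictMonoOn.Iic_union_Ici (a := 0) (strictMonoOn_id.congr fun s hs => (hneg s hs).symm)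
      (hmono.congr fun s hs => (hpos s hs).symm)
  have hcont' : Continuous a' :=
    (hcont.comp_continuous (continuous_id.max continuous_const) fun s => le_max_right s 0).add
      (continuous_id.min continuous_const)
  have hsurj : Function.Surjective a' := hcont'.surjective
    (htop.congr' (eventually_ge_atTop 0 |>.mono fun s hs => (hpos s hs).symm))
    (tendsto_id.congr' (eventually_le_atBot 0 |>.mono fun s hs => (hneg s hs).symm))
  exact ⟨StrictMono.orderIsoOfSurjective a' hstrict hsurj, hpos⟩

theorem isKLFun_orderIso_symm_mul_rpow (e : ℝ ≃o ℝ) (he : e 0 = 0) {K : ℝ → ℝ}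
    (hKc : ContinuousOn K (Ici 0)) (hKm : StrictMonoOn K (Ici 0)) (hK0 : K 0 = 0)
    {r : ℝ} (hr0 : 0 < r) (hr1 : r < 1) : IsKLFun fun s t => e.symm (K s * r ^ t) := by
  have he' : e.symm 0 = 0 := by rw [← he, e.symm_apply_apply, he]
  have hKnn : ∀ s, 0 ≤ s → 0 ≤ K s := fun s hs => hK0 ▸ hKm.monotoneOn self_mem_Ici hs hs
  refine ⟨fun t _ => ⟨?_, ?_, ?_, ?_⟩, fun s hs => ⟨?_, ?_⟩⟩
  · exact e.symm.continuous.comp_continuousOn (hKc.mul continuousOn_const)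
  · exact fun s hs s' hs' hss =>
      e.symm.strictMono (mul_lt_mul_of_pos_right (hKm hs hs' hss) (Real.rpow_pos_of_pos hr0 t))
  · simp [hK0, he']
  · exact fun s hs => he' ▸ e.symm.monotone (mul_nonneg (hKnn s hs) (Real.rpow_nonneg hr0.le t))
  · exact fun t _ t' _ htt => e.symm.monotone
      (mul_le_mul_of_nonneg_left (Real.rpow_le_rpow_of_exponent_ge hr0 hr1.le htt) (hKnn s hs))
  · have h := (tendsto_rpow_atTop_of_base_lt_one r (by linarith) hr1).const_mul (K s)
    rw [mul_zero] at h
    exact he' ▸ (e.symm.continuous.tendsto 0).comp h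

noncomputable def doublingAverage (g : ℝ → ℝ) (s : ℝ) : ℝ := ∫ v in (1 : ℝ)..2, g (s * v)

theorem doublingAverage_zero (g : ℝ → ℝ) : doublingAverage g 0 = g 0 := by
  norm_num [doublingAverage]

section doublingAverage

variable {g : ℝ → ℝ} (hg : Monotone g)
include hg

theorem intervalIntegrable_comp_mul_of_monotone {s : ℝ} (hs : 0 ≤ s) :
    IntervalIntegrable (fun v => g (s * v)) volume 1 2 :=
  (hg.comp fun _ _ h => mul_le_mul_of_nonneg_left h hs).intervalIntegrable

theorem le_doublingAverage {s : ℝ} (hs : 0 ≤ s) : g s ≤ doublingAverage g s := by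
  have h := intervalIntegral.integral_mono_on (by norm_num) intervalIntegrable_const
    (intervalIntegrable_comp_mul_of_monotone hg hs) fun v hv => hg (le_mul_of_one_le_right hs hv.1)
  norm_num at h
  exact h

theorem doublingAverage_le {s : ℝ} (hs : 0 ≤ s) : doublingAverage g s ≤ g (2 * s) := by
  have h := intervalIntegral.integral_mono_on (by norm_num) (intervalIntegrable_comp_mul_of_monotone hg hs)
    intervalIntegrable_const fun v hv => hg (by nlinarith [hv.2] : s * v ≤ 2 * s)
  norm_num at h
  exact h

theorem monotoneOn_doublingAverage : MonotoneOn (doublingAverage g) (Ici 0) :=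
  fun s hs t ht hst => intervalIntegral.integral_mono_on (by norm_num)
    (intervalIntegrable_comp_mul_of_monotone hg hs) (intervalIntegrable_comp_mul_of_monotone hg ht)
    fun v hv => hg (mul_le_mul_of_nonneg_right hst (by linarith [hv.1]))

theorem continuousOn_doublingAverage_Ioi : ContinuousOn (doublingAverage g) (Ioi 0) := by
  set G : ℝ → ℝ := fun x => ∫ u in (0 : ℝ)..x, g u
  have hG : Continuous G :=
    intervalIntegral.continuous_primitive (fun _ _ => hg.intervalIntegrable) 0
  have heq : EqOn (fun s => s⁻¹ * (G (2 * s) - G s)) (doublingAverage g) (Ioi 0) := by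
    intro s hs
    simp only [doublingAverage, intervalIntegral.integral_comp_mul_left g (ne_of_gt hs),
      smul_eq_mul, mul_one, G]
    rw [intervalIntegral.integral_interval_sub_left hg.intervalIntegrable hg.intervalIntegrable,
      mul_comm s 2]
  refine ContinuousOn.congr ?_ heq.symm
  exact continuousOn_inv₀.mono (fun s hs => ne_of_gt hs) |>.mul
    ((hG.comp (continuous_const.mul continuous_id)).sub hG).continuousOn

theorem continuousWithinAt_doublingAverage_zero (hgc : ContinuousWithinAt g (Ici 0) 0) :
    ContinuousWithinAt (doublingAverage g) (Ici 0) 0 := by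
  have h2 : ContinuousWithinAt (fun s => g (2 * s)) (Ici 0) 0 :=
    hgc.comp_of_eq (continuous_const_mul 2).continuousWithinAt
      (fun s (hs : 0 ≤ s) => mem_Ici.mpr (by positivity)) (mul_zero 2)
  rw [ContinuousWithinAt, doublingAverage_zero g]
  refine tendsto_of_tendsto_of_tendsto_of_le_of_le' tendsto_const_nhds
    (by simpa using h2.tendsto) ?_ ?_
  · filter_upwards [self_mem_nhdsWithin] with s hs
    exact (hg hs).trans (le_doublingAverage hg hs)
  · filter_upwards [self_mem_nhdsWithin] with s hs using doublingAverage_le hg hs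

theorem continuousOn_doublingAverage (hgc : ContinuousWithinAt g (Ici 0) 0) :
    ContinuousOn (doublingAverage g) (Ici 0) := by
  intro s hs
  rcases (mem_Ici.mp hs).eq_or_lt with rfl | hpos
  · exact continuousWithinAt_doublingAverage_zero hg hgc
  · exact (continuousOn_doublingAverage_Ioi hg).continuousAt (Ioi_mem_nhds hpos)
      |>.continuousWithinAt

end doublingAverage

theorem exists_continuousOn_strictMonoOn_le {g : ℝ → ℝ} (hg : Monotone g) (hg0 : g 0 = 0)
    (hgc : ContinuousWithinAt g (Ici 0) 0) :
    ∃ K : ℝ → ℝ, ContinuousOn K (Ici 0) ∧ StrictMonoOn K (Ici 0) ∧ K 0 = 0 ∧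
      ∀ s, 0 ≤ s → g s ≤ K s := by
  refine ⟨fun s => s + doublingAverage g s,
    continuousOn_id.add (continuousOn_doublingAverage hg hgc),
    strictMonoOn_id.add_monotone (monotoneOn_doublingAverage hg),
    by simp [doublingAverage_zero g, hg0],
    fun s hs => ?_⟩
  linarith [le_doublingAverage hg hs]

theorem IsKInfFun.exists_isKLFun_of_le_mul_pow {a g : ℝ → ℝ} (ha : IsKInfFun a)
    (hg : MonotoneOn g (Ici 0)) (hg0 : g 0 = 0) (hgc : ContinuousWithinAt g (Ici 0) 0)
    {r : ℝ} (hr0 : 0 < r) (hr1 : r < 1) :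
    ∃ σ : ℝ → ℝ → ℝ, IsKLFun σ ∧
      ∀ s u : ℝ, 0 ≤ s → 0 ≤ u → ∀ t : ℕ, a u ≤ g s * r ^ t → u ≤ σ s t := by
  have hg' : Monotone fun s => g (max s 0) := fun s t hst =>
    hg (le_max_right s 0) (le_max_right t 0) (max_le_max_right 0 hst)
  obtain ⟨K, hKc, hKm, hK0, hgK⟩ := exists_continuousOn_strictMonoOn_le hg' (by simp [hg0])
    (hgc.congr (fun s (hs : 0 ≤ s) => by simp [hs]) (by simp))
  obtain ⟨e, hea⟩ := ha.exists_orderIso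
  refine ⟨fun s t => e.symm (K s * r ^ t),
    isKLFun_orderIso_symm_mul_rpow e (by simp [hea 0 le_rfl, ha.2.2.1]) hKc hKm hK0 hr0 hr1,
    fun s u hs hu t hau => ?_⟩
  have hgs : g s ≤ K s := by simpa [hs] using hgK s hs
  calc u = e.symm (e u) := (e.symm_apply_apply u).symm
    _ ≤ e.symm (K s * r ^ (t : ℝ)) := e.symm.monotone <| by
        rw [hea u hu, Real.rpow_natCast]
        exact hau.trans (mul_le_mul_of_nonneg_right hgs (pow_nonneg hr0.le t))

theorem le_mul_pow_of_vector_lyapunov {ι E : Type*} [Fintype ι] [DecidableEq ι]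
    [NormedAddCommGroup E] {Γ : Matrix ι ι ℝ} (hΓ : ∀ i j, 0 ≤ Γ i j) {c r : ℝ} (hc : 0 ≤ c)
    (hr0 : 0 < r) (hr1 : r ≤ 1) (hΓk : ∀ (k : ℕ) (i : ι), ∑ j, |(Γ ^ k) i j| ≤ c * r ^ k)
    {a₁ a₂ : ℝ → ℝ} (ha₂ : IsKInfFun a₂) (ha12 : ∀ s, 0 ≤ s → a₁ s ≤ a₂ s)
    {A : Set E} {x₀ : E} {V : ι → E → ℝ}
    (hlow : ∀ x ∈ A, ∃ i, a₁ ‖x - x₀‖ ≤ V i x) (hup : ∀ x ∈ A, ∀ i, V i x ≤ a₂ ‖x - x₀‖)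
    {m : ℕ} {x : ℕ → E} (hxA : ∀ t, m ≤ t → x t ∈ A)
    (hdec : ∀ t, m ≤ t → ∀ i, V i (x (t + 1)) ≤ ∑ j, Γ i j * V j (x t))
    {B : ℝ} (hB : ∀ t ≤ m, ‖x t - x₀‖ ≤ B) (t : ℕ) :
    a₁ ‖x t - x₀‖ ≤ (c + 1) / r ^ m * a₂ B * r ^ t := by
  have hB0 : 0 ≤ B := (norm_nonneg _).trans (hB 0 m.zero_le)
  have ha₂B : 0 ≤ a₂ B := ha₂.nonneg hB0
  have ha₂le : ∀ t ≤ m, a₂ ‖x t - x₀‖ ≤ a₂ B := fun t ht =>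
    ha₂.2.1.monotoneOn (norm_nonneg _) hB0 (hB t ht)
  rcases le_total t m with htm | hmt
  · have hgain : 1 ≤ (c + 1) / r ^ m * r ^ t := by
      rw [div_mul_eq_mul_div, le_div_iff₀ (pow_pos hr0 m), one_mul]
      nlinarith [pow_le_pow_of_le_one hr0.le hr1 htm, pow_pos hr0 t]
    calc a₁ ‖x t - x₀‖ ≤ a₂ B := (ha12 _ (norm_nonneg _)).trans (ha₂le t htm)
      _ ≤ (c + 1) / r ^ m * r ^ t * a₂ B := le_mul_of_one_le_left ha₂B hgain
      _ = (c + 1) / r ^ m * a₂ B * r ^ t := by ring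
  · obtain ⟨k, rfl⟩ := Nat.exists_eq_add_of_le hmt
    obtain ⟨i, hi⟩ := hlow _ (hxA _ hmt)
    have hV : V i (x (m + k)) ≤ (Γ ^ k *ᵥ fun _ => a₂ B) i :=
      Matrix.le_pow_mulVec_of_le_mulVec hΓ (v := fun k i => V i (x (m + k)))
        (fun k i => hdec (m + k) (m.le_add_right k) i)
        (fun j => (hup _ (hxA m le_rfl) j).trans (ha₂le m le_rfl)) k i
    calc a₁ ‖x (m + k) - x₀‖ ≤ (∑ j, (Γ ^ k) i j) * a₂ B := by
          simpa [Matrix.mulVec, dotProduct, ← Finset.sum_mul] using hi.trans hV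
      _ ≤ (∑ j, |(Γ ^ k) i j|) * a₂ B :=
          mul_le_mul_of_nonneg_right (Finset.sum_le_sum fun j _ => le_abs_self _) ha₂B
      _ ≤ (c + 1) * r ^ k * a₂ B :=
          mul_le_mul_of_nonneg_right ((hΓk k i).trans (by nlinarith [pow_pos hr0 k])) ha₂B
      _ = (c + 1) / r ^ m * a₂ B * r ^ (m + k) := by
          field_simp
          ring

theorem stmt_7_general {n l lV : ℕ}
    (S : Set (EuclideanSpace ℝ (Fin n)))
    (xstar : EuclideanSpace ℝ (Fin n))
    (D : Set (EuclideanSpace ℝ (Fin l))) (hDcomp : IsCompact D)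
    (F : EuclideanSpace ℝ (Fin l) → EuclideanSpace ℝ (Fin n) → EuclideanSpace ℝ (Fin n))
    (hFS : ∀ d ∈ D, ∀ x ∈ S, F d x ∈ S)
    (hFeq : ∀ d ∈ D, F d xstar = xstar)
    (hFlocbdd : ∀ R : ℝ, ∃ C : ℝ, ∀ d ∈ D, ∀ x ∈ S, ‖x‖ ≤ R → ‖F d x‖ ≤ C)
    (hFcont : ∀ d ∈ D,
        ContinuousWithinAt (fun q : EuclideanSpace ℝ (Fin l) × EuclideanSpace ℝ (Fin n) =>
          F q.1 q.2) (D ×ˢ S) (d, xstar))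
    (A : Set (EuclideanSpace ℝ (Fin n)))
    (m : ℕ)
    (htrap : ∀ (x : ℕ → EuclideanSpace ℝ (Fin n)) (d : ℕ → EuclideanSpace ℝ (Fin l)),
        x 0 ∈ S → (∀ t, d t ∈ D) → (∀ t, x (t + 1) = F (d t) (x t)) →
        ∀ t, m ≤ t → x t ∈ A)
    (V : Fin lV → EuclideanSpace ℝ (Fin n) → ℝ)
    (Γ : Matrix (Fin lV) (Fin lV) ℝ)
    (hΓ : ∀ i j, 0 ≤ Γ i j)
    (hρ : ∀ μ : ℂ, ((Γ.map Complex.ofReal).charpoly).IsRoot μ → ‖μ‖ < 1)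
    (a₁ a₂ : ℝ → ℝ) (ha₁ : IsKInfFun a₁) (ha₂ : IsKInfFun a₂)
    (ha12 : ∀ s, 0 ≤ s → a₁ s ≤ a₂ s)
    (hlow : ∀ x ∈ A, ∃ i, a₁ ‖x - xstar‖ ≤ V i x)
    (hup : ∀ x ∈ A, ∀ i, V i x ≤ a₂ ‖x - xstar‖)
    (hdec : ∀ d ∈ D, ∀ x ∈ A, ∀ i, V i (F d x) ≤ ∑ j, Γ i j * V j x) :
    ∃ σKL : ℝ → ℝ → ℝ, IsKLFun σKL ∧
      ∀ (x : ℕ → EuclideanSpace ℝ (Fin n)) (d : ℕ → EuclideanSpace ℝ (Fin l)),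
        x 0 ∈ S → (∀ t, d t ∈ D) → (∀ t, x (t + 1) = F (d t) (x t)) →
        ∀ t : ℕ, ‖x t - xstar‖ ≤ σKL ‖x 0 - xstar‖ t := by
  obtain ⟨c, r, hc, hr0, hr1, hΓk⟩ := Γ.exists_sum_abs_pow_apply_le hρ
  set β := oneStepBound D S F xstar
  have hβ0 : β 0 = 0 := oneStepBound_zero hFeq
  have hβc : ContinuousAt β^[m] 0 :=
    (continuousAt_oneStepBound_zero hFeq fun _ hU =>
      hDcomp.eventually_forall_mem_of_continuousWithinAt hFcont hFeq hU).iterate hβ0 m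
  have hβm : id ≤ β^[m] := Function.id_le_iterate_of_id_le le_oneStepBound m
  set g : ℝ → ℝ := fun s => (c + 1) / r ^ m * a₂ (β^[m] s)
  have hgm : MonotoneOn g (Ici 0) := fun s hs t ht hst =>
    mul_le_mul_of_nonneg_left (ha₂.2.1.monotoneOn (hs.trans (hβm s)) (ht.trans (hβm t))
      ((monotone_oneStepBound hFlocbdd).iterate m hst)) (by positivity)
  have hg0 : g 0 = 0 := by simp [g, Function.iterate_fixed hβ0, ha₂.2.2.1]
  have hgc : ContinuousWithinAt g (Ici 0) 0 :=
    ((ha₂.1 _ (hβm 0)).comp hβc.continuousWithinAt fun s hs => hs.trans (hβm s)).const_mul _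
  obtain ⟨σ, hσ, hσle⟩ := ha₁.exists_isKLFun_of_le_mul_pow hgm hg0 hgc hr0 hr1
  refine ⟨σ, hσ, fun x d hx0 hd hx t => hσle _ _ (norm_nonneg _) (norm_nonneg _) t ?_⟩
  have hxA := htrap x d hx0 hd hx
  have hB : ∀ t ≤ m, ‖x t - xstar‖ ≤ β^[m] ‖x 0 - xstar‖ := fun t ht =>
    (norm_sub_le_oneStepBound_iterate hFlocbdd hFS hx0 hd hx t).trans
      (Function.monotone_iterate_of_id_le le_oneStepBound ht _)
  exact le_mul_pow_of_vector_lyapunov hΓ hc hr0 hr1.le hΓk ha₂ ha12 hlow hup hxA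
    (fun t ht i => hx t ▸ hdec _ (hd t) _ (hxA t ht) i) hB t

theorem stmt_7 {n l lV : ℕ}
    (S : Set (EuclideanSpace ℝ (Fin n))) (hSclosed : IsClosed S) (hSne : S.Nonempty)
    (xstar : EuclideanSpace ℝ (Fin n)) (hxstarS : xstar ∈ S)
    (D : Set (EuclideanSpace ℝ (Fin l))) (hDcomp : IsCompact D) (hDne : D.Nonempty)
    (F : EuclideanSpace ℝ (Fin l) → EuclideanSpace ℝ (Fin n) → EuclideanSpace ℝ (Fin n))
    (hFS : ∀ d ∈ D, ∀ x ∈ S, F d x ∈ S)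
    (hFeq : ∀ d ∈ D, F d xstar = xstar)
    (hFlocbdd : ∀ R : ℝ, ∃ C : ℝ, ∀ d ∈ D, ∀ x ∈ S, ‖x‖ ≤ R → ‖F d x‖ ≤ C)
    (hFcont : ∀ d ∈ D,
        ContinuousWithinAt (fun q : EuclideanSpace ℝ (Fin l) × EuclideanSpace ℝ (Fin n) =>
          F q.1 q.2) (D ×ˢ S) (d, xstar))
    (A : Set (EuclideanSpace ℝ (Fin n))) (hAS : A ⊆ S)
    (m : ℕ)
    (htrap : ∀ (x : ℕ → EuclideanSpace ℝ (Fin n)) (d : ℕ → EuclideanSpace ℝ (Fin l)),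
        x 0 ∈ S → (∀ t, d t ∈ D) → (∀ t, x (t + 1) = F (d t) (x t)) →
        ∀ t, m ≤ t → x t ∈ A)
    (V : Fin lV → EuclideanSpace ℝ (Fin n) → ℝ)
    (hVnonneg : ∀ i x, 0 ≤ V i x)
    (Γ : Matrix (Fin lV) (Fin lV) ℝ)
    (hΓ : ∀ i j, 0 ≤ Γ i j)
    (hρ : ∀ μ : ℂ, ((Γ.map Complex.ofReal).charpoly).IsRoot μ → ‖μ‖ < 1)
    (a₁ a₂ : ℝ → ℝ) (ha₁ : IsKInfFun a₁) (ha₂ : IsKInfFun a₂)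
    (ha12 : ∀ s, 0 ≤ s → a₁ s ≤ a₂ s)
    (hlow : ∀ x ∈ A, ∃ i, a₁ ‖x - xstar‖ ≤ V i x)
    (hup : ∀ x ∈ A, ∀ i, V i x ≤ a₂ ‖x - xstar‖)
    (hdec : ∀ d ∈ D, ∀ x ∈ A, ∀ i, V i (F d x) ≤ ∑ j, Γ i j * V j x) :
    ∃ σKL : ℝ → ℝ → ℝ, IsKLFun σKL ∧
      ∀ (x : ℕ → EuclideanSpace ℝ (Fin n)) (d : ℕ → EuclideanSpace ℝ (Fin l)),
        x 0 ∈ S → (∀ t, d t ∈ D) → (∀ t, x (t + 1) = F (d t) (x t)) →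
        ∀ t : ℕ, ‖x t - xstar‖ ≤ σKL ‖x 0 - xstar‖ t :=
  stmt_7_general S xstar D hDcomp F hFS hFeq hFlocbdd hFcont A m htrap V Γ hΓ hρ a₁ a₂ ha₁ ha₂ ha12
    hlow hup hdec
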